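/- arXiv:1409.5865 — 4 statements merged into one kernel-verified Lean document; each statement's English description precedes it below -/
import Mathlib

section
/- Let x ∈ X_n in a precubical set X, and let (k_1,…,k_n) and (ℓ_1,…,ℓ_n) be sequences of indices with k_j ≤ j and ℓ_j ≤ j for all j = 1,…,n. Define x_j = δ_{k_j}^0⋯δ_{k_n}^0 x and y_j = δ_{ℓ_j}^0⋯δ_{ℓ_n}^0 x. Then the cube paths (x_1,…,x_n,x) and (y_1,…,y_n,x) are homotopic. -/
/-!
Induction on `n`. Two chains whose last face indices agree are homotopic by induction, with `x`
appended. If the last indices are `k < ℓ`, the precubical identity `δ_k δ_ℓ x = δ_{ℓ-1} δ_k x`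
lets us pass, inside the homotopy classes given by induction, to two chains that pass through
`δ_ℓ x` and `δ_k x` respectively and agree everywhere else; these differ by a single exchange
of type (1).
-/

set_option autoImplicit false

/-- A precubical set: a graded set with face maps `δ_k^ν` (ν encoded as `Bool`,
`false` = lower face `δ^0`, `true` = upper face `δ^1`; indices are 0-based)
satisfying the precubical identity. -/
structure PCSet : Type 1 where
  cube : ℕ → Type
  face : ∀ {n : ℕ}, Bool → Fin (n + 1) → cube (n + 1) → cube n
  precub : ∀ {n : ℕ} (ν μ : Bool) (k l : ℕ) (hk : k < n + 1) (hl : l < n + 2)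
      (_ : k < l) (x : cube (n + 2)),
      face ν ⟨k, hk⟩ (face μ ⟨l, hl⟩ x) =
        face μ ⟨l - 1, by omega⟩ (face ν ⟨k, by omega⟩ x)

namespace PCSet

/-- A cube of arbitrary dimension. -/
abbrev Cell (X : PCSet) : Type := Σ n : ℕ, X.cube n

/-- One step of a cube path: either `x = δ_k^0 y` or `y = δ_k^1 x`. -/
def Step (X : PCSet) (x y : X.Cell) : Prop :=
  (∃ (n : ℕ) (k : Fin (n + 1)) (c : X.cube (n + 1)),
      x = ⟨n, X.face false k c⟩ ∧ y = ⟨n + 1, c⟩) ∨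
  (∃ (n : ℕ) (k : Fin (n + 1)) (c : X.cube (n + 1)),
      x = ⟨n + 1, c⟩ ∧ y = ⟨n, X.face true k c⟩)

/-- A cube path: a nonempty sequence of cubes, consecutive ones related by `Step`. -/
def IsCubePath (X : PCSet) (l : List X.Cell) : Prop :=
  l ≠ [] ∧ l.Chain' X.Step

/-- Adjacency condition (1): `x_{p−1} = δ_k^0 x_p`, `x_p = δ_ℓ^0 x_{p+1}`,
`y_{p−1} = δ_{ℓ−1}^0 y_p`, `y_p = δ_k^0 y_{p+1}`, `k < ℓ`.
Here `a = x_{p-1} = y_{p-1}`, `b = x_p`, `b' = y_p`, `c = x_{p+1} = y_{p+1}`. -/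
def Adj1 (X : PCSet) (a b b' c : X.Cell) : Prop :=
  ∃ (n k l : ℕ) (hk : k < n + 1) (hl : l < n + 2) (_ : k < l) (u : X.cube (n + 2)),
    c = ⟨n + 2, u⟩ ∧
    b = ⟨n + 1, X.face false ⟨l, hl⟩ u⟩ ∧
    b' = ⟨n + 1, X.face false ⟨k, by omega⟩ u⟩ ∧
    a = ⟨n, X.face false ⟨k, hk⟩ (X.face false ⟨l, hl⟩ u)⟩ ∧
    a = ⟨n, X.face false ⟨l - 1, by omega⟩ (X.face false ⟨k, by omega⟩ u)⟩

/-- Adjacency condition (2): `x_p = δ_k^1 x_{p−1}`, `x_{p+1} = δ_ℓ^1 x_p`,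
`y_p = δ_{ℓ−1}^1 y_{p−1}`, `y_{p+1} = δ_k^1 y_p`, `k < ℓ`. -/
def Adj2 (X : PCSet) (a b b' c : X.Cell) : Prop :=
  ∃ (n k l : ℕ) (hk : k < n + 2) (hl : l < n + 1) (_ : k < l) (u : X.cube (n + 2)),
    a = ⟨n + 2, u⟩ ∧
    b = ⟨n + 1, X.face true ⟨k, hk⟩ u⟩ ∧
    b' = ⟨n + 1, X.face true ⟨l - 1, by omega⟩ u⟩ ∧
    c = ⟨n, X.face true ⟨l, hl⟩ (X.face true ⟨k, hk⟩ u)⟩ ∧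
    c = ⟨n, X.face true ⟨k, by omega⟩ (X.face true ⟨l - 1, by omega⟩ u)⟩

/-- Adjacency condition (3): `x_p = δ_k^0 δ_ℓ^1 y_p`, `y_{p−1} = δ_k^0 y_p`,
`y_{p+1} = δ_ℓ^1 y_p`, `k < ℓ`. -/
def Adj3 (X : PCSet) (a b b' c : X.Cell) : Prop :=
  ∃ (n k l : ℕ) (hk : k < n + 1) (hl : l < n + 2) (_ : k < l) (u : X.cube (n + 2)),
    b' = ⟨n + 2, u⟩ ∧
    b = ⟨n, X.face false ⟨k, hk⟩ (X.face true ⟨l, hl⟩ u)⟩ ∧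
    a = ⟨n + 1, X.face false ⟨k, by omega⟩ u⟩ ∧
    c = ⟨n + 1, X.face true ⟨l, hl⟩ u⟩

/-- Adjacency condition (4): `x_p = δ_k^1 δ_ℓ^0 y_p`, `y_{p−1} = δ_ℓ^0 y_p`,
`y_{p+1} = δ_k^1 y_p`, `k < ℓ`. -/
def Adj4 (X : PCSet) (a b b' c : X.Cell) : Prop :=
  ∃ (n k l : ℕ) (hk : k < n + 1) (hl : l < n + 2) (_ : k < l) (u : X.cube (n + 2)),
    b' = ⟨n + 2, u⟩ ∧
    b = ⟨n, X.face true ⟨k, hk⟩ (X.face false ⟨l, hl⟩ u)⟩ ∧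
    a = ⟨n + 1, X.face false ⟨l, hl⟩ u⟩ ∧
    c = ⟨n + 1, X.face true ⟨k, by omega⟩ u⟩

/-- One of the four adjacency conditions holds, possibly with the roles of the
two paths exchanged. -/
def AdjMid (X : PCSet) (a b b' c : X.Cell) : Prop :=
  Adj1 X a b b' c ∨ Adj2 X a b b' c ∨ Adj3 X a b b' c ∨ Adj4 X a b b' c ∨
  Adj1 X a b' b c ∨ Adj2 X a b' b c ∨ Adj3 X a b' b c ∨ Adj4 X a b' b c

/-- Two cube paths are adjacent: they agree everywhere except at exactly one
(interior) index `p`, where one of the four exchange conditions holds. -/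
def Adjacent (X : PCSet) (l₁ l₂ : List X.Cell) : Prop :=
  X.IsCubePath l₁ ∧ X.IsCubePath l₂ ∧ l₁.length = l₂.length ∧
  ∃ p : ℕ, 0 < p ∧ p + 1 < l₁.length ∧
    (∀ q : ℕ, q ≠ p → l₁[q]? = l₂[q]?) ∧
    l₁[p]? ≠ l₂[p]? ∧
    ∃ a b b' c : X.Cell,
      l₁[p - 1]? = some a ∧ l₁[p]? = some b ∧ l₂[p]? = some b' ∧
      l₁[p + 1]? = some c ∧ X.AdjMid a b b' c

/-- Homotopy of cube paths: the reflexive-transitive closure of adjacency. -/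
def Homotopic (X : PCSet) : List X.Cell → List X.Cell → Prop :=
  Relation.ReflTransGen X.Adjacent

/-- Iterated application of face maps, parameters in application order. -/
inductive IterFace (X : PCSet) : X.Cell → List (ℕ × Bool) → X.Cell → Prop
  | nil (c : X.Cell) : IterFace X c [] c
  | cons {n : ℕ} (ν : Bool) (k : Fin (n + 1)) (c : X.cube (n + 1)) {l : List (ℕ × Bool)}
      {res : X.Cell} :
      IterFace X ⟨n, X.face ν k c⟩ l res →
      IterFace X ⟨n + 1, c⟩ ((k.1, ν) :: l) res

/-- `p` is obtained from `c` as `δ_{k_1}^{ν_1}⋯δ_{k_q}^{ν_q} c` where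
`k_1 < ⋯ < k_q` (in application order, the index list `ks` is strictly
decreasing). -/
def RepGen (X : PCSet) (c p : X.Cell) (ks : List ℕ) : Prop :=
  List.Pairwise (· > ·) ks ∧
  ∃ νs : List Bool, νs.length = ks.length ∧ IterFace X c (ks.zip νs) p

/-- `l` is a representing sequence for a precubical path object. -/
def IsRep (X : PCSet) (l : List X.Cell) : Prop :=
  l ≠ [] ∧ l.Nodup ∧ l.Chain' X.Step ∧
  ∀ p : X.Cell, ∃ c ∈ l, (∃ ks, RepGen X c p ks) ∧
    ∀ ks₁ ks₂ : List ℕ, RepGen X c p ks₁ → RepGen X c p ks₂ → ks₁ = ks₂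

/-- Morphisms of precubical sets. -/
structure Hom (X Y : PCSet) where
  map : ∀ n : ℕ, X.cube n → Y.cube n
  comm : ∀ (n : ℕ) (ν : Bool) (k : Fin (n + 1)) (x : X.cube (n + 1)),
    map n (X.face ν k x) = Y.face ν k (map (n + 1) x)

def Hom.id (X : PCSet) : Hom X X where
  map _ x := x
  comm _ _ _ _ := rfl

def Hom.comp {X Y Z : PCSet} (g : Hom Y Z) (f : Hom X Y) : Hom X Z where
  map n x := g.map n (f.map n x)
  comm n ν k x := by (try dsimp only); rw [f.comm, g.comm]

def Hom.cell {X Y : PCSet} (f : Hom X Y) (x : X.Cell) : Y.Cell := ⟨x.1, f.map x.1 x.2⟩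

/-- `R` is a precubical subset of the product `X × Y`. -/
def PrecubRel (X Y : PCSet) (R : Set (X.Cell × Y.Cell)) : Prop :=
  (∀ p ∈ R, p.1.1 = p.2.1) ∧
  ∀ (n : ℕ) (x : X.cube (n + 1)) (y : Y.cube (n + 1)),
    ((⟨n + 1, x⟩, ⟨n + 1, y⟩) : X.Cell × Y.Cell) ∈ R →
    ∀ (ν : Bool) (k : Fin (n + 1)),
      ((⟨n, X.face ν k x⟩, ⟨n, Y.face ν k y⟩) : X.Cell × Y.Cell) ∈ R

/-- One-step bisimulation via a precubical relation (condition (2) of Thm 3.4). -/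
def OneStepBisim (X Y : PCSet) (bx : X.Cell) (by' : Y.Cell) : Prop :=
  ∃ R : Set (X.Cell × Y.Cell), PrecubRel X Y R ∧ (bx, by') ∈ R ∧
    ∀ (n : ℕ) (x₁ : X.cube n) (y₁ : Y.cube n),
      ((⟨n, x₁⟩, ⟨n, y₁⟩) : X.Cell × Y.Cell) ∈ R →
      (∀ (x₂ : X.cube (n + 1)) (k : Fin (n + 1)), x₁ = X.face false k x₂ →
        ∃ y₂ : Y.cube (n + 1), y₁ = Y.face false k y₂ ∧
          ((⟨n + 1, x₂⟩, ⟨n + 1, y₂⟩) : X.Cell × Y.Cell) ∈ R) ∧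
      (∀ (y₂ : Y.cube (n + 1)) (k : Fin (n + 1)), y₁ = Y.face false k y₂ →
        ∃ x₂ : X.cube (n + 1), x₁ = X.face false k x₂ ∧
          ((⟨n + 1, x₂⟩, ⟨n + 1, y₂⟩) : X.Cell × Y.Cell) ∈ R)

/-- Cube-path matching bisimulation (condition (3) of Thm 3.4). -/
def PathBisim (X Y : PCSet) (bx : X.Cell) (by' : Y.Cell) : Prop :=
  ∃ R : Set (X.Cell × Y.Cell), PrecubRel X Y R ∧ (bx, by') ∈ R ∧
    ∀ (x₁ : X.Cell) (y₁ : Y.Cell), (x₁, y₁) ∈ R →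
      (∀ lx : List X.Cell, X.IsCubePath lx → lx.head? = some x₁ →
        ∃ ly : List Y.Cell, Y.IsCubePath ly ∧ ly.head? = some y₁ ∧
          ly.length = lx.length ∧ ∀ pr ∈ lx.zip ly, pr ∈ R) ∧
      (∀ ly : List Y.Cell, Y.IsCubePath ly → ly.head? = some y₁ →
        ∃ lx : List X.Cell, X.IsCubePath lx ∧ lx.head? = some x₁ ∧
          lx.length = ly.length ∧ ∀ pr ∈ lx.zip ly, pr ∈ R)

/-- A fan-shaped cube path: one-dimensional (alternating dimensions 0 and 1)
until it has to build up to its end cube of dimension `n`. -/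
def IsFan (X : PCSet) (l : List X.Cell) : Prop :=
  ∃ (n : ℕ) (c : X.cube n), l.getLast? = some ⟨n, c⟩ ∧
    ∀ (i : ℕ) (hi : i < l.length),
      (i + n + 1 ≤ l.length → (l.get ⟨i, hi⟩).1 = if i % 2 = 0 then 0 else 1) ∧
      (l.length < i + n + 1 → (l.get ⟨i, hi⟩).1 = n + i + 1 - l.length)

/-- The cube path `(x_1, …, x_n, x)` obtained by repeatedly taking lower faces
`x_j = δ_{k_j}^0 ⋯ δ_{k_n}^0 x`, one for each choice of indices `k_j ≤ j`. -/
def lowerChain (X : PCSet) : ∀ (n : ℕ), X.cube n → (∀ j : Fin n, Fin (j.1 + 1)) → List X.Cell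
  | 0, x, _ => [⟨0, x⟩]
  | n + 1, x, ks =>
      lowerChain X n (X.face false (ks ⟨n, Nat.lt_succ_self n⟩) x)
        (fun j => ks ⟨j.1, by omega⟩) ++ [⟨n + 1, x⟩]

end PCSet

open PCSet

/-- A higher-dimensional automaton: a pointed precubical set. -/
structure HDA extends PCSet where
  base : cube 0

/-- Pointed morphisms of higher-dimensional automata. -/
structure HDAHom (X Y : HDA) where
  toHom : Hom X.toPCSet Y.toPCSet
  pointed : toHom.map 0 X.base = Y.base

def HDAHom.id (X : HDA) : HDAHom X X := ⟨Hom.id _, rfl⟩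

def HDAHom.comp {X Y Z : HDA} (g : HDAHom Y Z) (f : HDAHom X Y) : HDAHom X Z :=
  ⟨g.toHom.comp f.toHom, by
    show g.toHom.map 0 (f.toHom.map 0 X.base) = Z.base
    rw [f.pointed, g.pointed]⟩

def HDAHom.IsIso {X Y : HDA} (f : HDAHom X Y) : Prop :=
  ∃ g : HDAHom Y X, g.comp f = HDAHom.id X ∧ f.comp g = HDAHom.id Y

/-- A pointed cube path: a cube path starting in the base point. -/
def HDA.IsPointedPath (X : HDA) (l : List X.toPCSet.Cell) : Prop :=
  X.toPCSet.IsCubePath l ∧ l.head? = some ⟨0, X.base⟩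

/-- A cube is reachable if some pointed cube path ends in it. -/
def HDA.Reachable (X : HDA) (x : X.toPCSet.Cell) : Prop :=
  ∃ l, X.IsPointedPath l ∧ l.getLast? = some x

/-- The type of pointed cube paths of `X` ending in an `n`-cube. -/
def HDA.PPath (X : HDA) (n : ℕ) : Type :=
  { l : List X.toPCSet.Cell //
      X.IsPointedPath l ∧ ∃ c : X.cube n, l.getLast? = some ⟨n, c⟩ }

/-- A pointed precubical path object (object of the category HDP). -/
def HDA.IsPathObj (P : HDA) : Prop :=
  ∃ l, IsRep P.toPCSet l ∧ l.head? = some ⟨0, P.base⟩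

/-- A cube path extension: maps the representation of `P` to an initial segment
of the representation of `Q`. -/
def IsExtension {P Q : HDA} (f : HDAHom P Q) : Prop :=
  ∃ (lp : List P.toPCSet.Cell) (lq : List Q.toPCSet.Cell),
    IsRep P.toPCSet lp ∧ lp.head? = some ⟨0, P.base⟩ ∧
    IsRep Q.toPCSet lq ∧ lq.head? = some ⟨0, Q.base⟩ ∧
    ∃ hle : lp.length ≤ lq.length,
      ∀ (j : ℕ) (hj : j < lp.length),
        f.toHom.cell (lp.get ⟨j, hj⟩) = lq.get ⟨j, lt_of_lt_of_le hj hle⟩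

/-- Morphisms of the category HDP: generated by pointed cube path extensions
and isomorphisms between pointed precubical path objects. -/
inductive IsHDPHom : ∀ {P Q : HDA}, HDAHom P Q → Prop
  | ext {P Q : HDA} (f : HDAHom P Q) :
      P.IsPathObj → Q.IsPathObj → IsExtension f → IsHDPHom f
  | iso {P Q : HDA} (f : HDAHom P Q) :
      P.IsPathObj → Q.IsPathObj → f.IsIso → IsHDPHom f
  | comp {P Q R : HDA} {f : HDAHom P Q} {g : HDAHom Q R} :
      IsHDPHom f → IsHDPHom g → IsHDPHom (g.comp f)

/-- Open maps of HDA: right lifting property with respect to HDP. -/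
def IsOpenHom {X Y : HDA} (f : HDAHom X Y) : Prop :=
  ∀ (P Q : HDA) (g : HDAHom P Q), IsHDPHom g →
    ∀ (p : HDAHom P X) (q : HDAHom Q Y), f.comp p = q.comp g →
      ∃ r : HDAHom Q X, r.comp g = p ∧ f.comp r = q

/-- hd-bisimilarity: a span of open maps. -/
def HdBisimilar (X Y : HDA) : Prop :=
  ∃ (Z : HDA) (f : HDAHom Z X) (g : HDAHom Z Y), IsOpenHom f ∧ IsOpenHom g

/-- A higher-dimensional tree: every cube is the end of exactly one homotopy
class of pointed cube paths. -/
def HDA.IsTree (X : HDA) : Prop :=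
  ∀ x : X.toPCSet.Cell,
    (∃ l, X.IsPointedPath l ∧ l.getLast? = some x) ∧
    ∀ l₁ l₂ : List X.toPCSet.Cell, X.IsPointedPath l₁ → l₁.getLast? = some x →
      X.IsPointedPath l₂ → l₂.getLast? = some x → X.toPCSet.Homotopic l₁ l₂

/-- An unfolding of the HDA `X`: an HDA `Xu` whose `n`-cubes are exactly the
homotopy classes (`cls`) of pointed cube paths of `X` ending in an `n`-cube,
with the face maps, base point and projection of Definition 4.3. -/
structure Unfolding (X : HDA) where
  Xu : HDA
  proj : HDAHom Xu X
  cls : ∀ n : ℕ, X.PPath n → Xu.cube n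
  cls_eq : ∀ (n : ℕ) (a b : X.PPath n),
    cls n a = cls n b ↔ X.toPCSet.Homotopic a.1 b.1
  cls_surj : ∀ (n : ℕ) (x : Xu.cube n), ∃ a, cls n a = x
  cls_base : ∀ a : X.PPath 0, a.1 = [⟨0, X.base⟩] → cls 0 a = Xu.base
  face_true : ∀ (n : ℕ) (k : Fin (n + 1)) (a : X.PPath (n + 1)) (c : X.cube (n + 1)),
    a.1.getLast? = some ⟨n + 1, c⟩ →
    ∀ b : X.PPath n, b.1 = a.1 ++ [⟨n, X.toPCSet.face true k c⟩] →
      Xu.toPCSet.face true k (cls (n + 1) a) = cls n b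
  face_false : ∀ (n : ℕ) (k : Fin (n + 1)) (a : X.PPath (n + 1)) (c : X.cube (n + 1)),
    a.1.getLast? = some ⟨n + 1, c⟩ →
    ∀ b : X.PPath n,
      (Xu.toPCSet.face false k (cls (n + 1) a) = cls n b ↔
        b.1.getLast? = some ⟨n, X.toPCSet.face false k c⟩ ∧
          X.toPCSet.Homotopic (b.1 ++ [⟨n + 1, c⟩]) a.1)
  proj_cls : ∀ (n : ℕ) (a : X.PPath n) (c : X.cube n),
    a.1.getLast? = some ⟨n, c⟩ → proj.toHom.map n (cls n a) = c

/-- The set `δ̃_k^0 [l]` of Definition 4.3: pointed cube paths `l'` with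
`l'` ending in `δ_k^0 c` and `l' * (c) ∼ l`. -/
def predSet (X : HDA) (n : ℕ) (k : Fin (n + 1)) (c : X.cube (n + 1))
    (l : List X.toPCSet.Cell) : Set (List X.toPCSet.Cell) :=
  { l' | X.IsPointedPath l' ∧ l'.getLast? = some ⟨n, X.toPCSet.face false k c⟩ ∧
      X.toPCSet.Homotopic (l' ++ [(⟨n + 1, c⟩ : X.toPCSet.Cell)]) l }

/-- Prefix order on homotopy classes (cubes of an unfolding): some
representatives are prefix-related. -/
def Unfolding.ClassLe {X : HDA} (U : Unfolding X) (c d : U.Xu.toPCSet.Cell) : Prop :=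
  ∃ (a : X.PPath c.1) (b : X.PPath d.1),
    U.cls c.1 a = c.2 ∧ U.cls d.1 b = d.2 ∧ a.1 <+: b.1

/-- `h` is the morphism of unfoldings induced by `g` (i.e. `g̃`). -/
def IsUnfoldMap {X Y : HDA} (UX : Unfolding X) (UY : Unfolding Y)
    (g : HDAHom X Y) (h : HDAHom UX.Xu UY.Xu) : Prop :=
  ∀ (n : ℕ) (a : X.PPath n), ∃ b : Y.PPath n,
    b.1 = a.1.map g.toHom.cell ∧ h.toHom.map n (UX.cls n a) = UY.cls n b

/-- Open maps in the category HDAh: right lifting property with respect to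
HDPh (morphisms of unfoldings corresponding to HDP-morphisms under the
projections). -/
def IsOpenHDAh {X Y : HDA} (UX : Unfolding X) (UY : Unfolding Y)
    (f : HDAHom UX.Xu UY.Xu) : Prop :=
  ∀ (P Q : HDA) (UP : Unfolding P) (UQ : Unfolding Q) (g : HDAHom UP.Xu UQ.Xu),
    (∃ g₀ : HDAHom P Q, IsHDPHom g₀ ∧ UQ.proj.comp g = g₀.comp UP.proj) →
    ∀ (p : HDAHom UP.Xu UX.Xu) (q : HDAHom UQ.Xu UY.Xu),
      f.comp p = q.comp g →
      ∃ r : HDAHom UQ.Xu UX.Xu, r.comp g = p ∧ f.comp r = q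

/-- Homotopy bisimilarity: a span of open maps in HDAh. -/
def HomotopyBisimilar (X Y : HDA) : Prop :=
  ∃ (Z : HDA) (UX : Unfolding X) (UY : Unfolding Y) (UZ : Unfolding Z)
    (f : HDAHom UZ.Xu UX.Xu) (g : HDAHom UZ.Xu UY.Xu),
    IsOpenHDAh UZ UX f ∧ IsOpenHDAh UZ UY g

/-- Prefix-matching bisimulation on unfoldings (condition (4) of Prop 6.5). -/
def PrefixBisim {X Y : HDA} (UX : Unfolding X) (UY : Unfolding Y) : Prop :=
  ∃ R : Set (UX.Xu.toPCSet.Cell × UY.Xu.toPCSet.Cell),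
    PrecubRel UX.Xu.toPCSet UY.Xu.toPCSet R ∧
    ((⟨0, UX.Xu.base⟩, ⟨0, UY.Xu.base⟩) : _ × _) ∈ R ∧
    ∀ (c : UX.Xu.toPCSet.Cell) (d : UY.Xu.toPCSet.Cell), (c, d) ∈ R →
      (∀ c₂, UX.ClassLe c c₂ → ∃ d₂, UY.ClassLe d d₂ ∧ (c₂, d₂) ∈ R) ∧
      (∀ d₂, UY.ClassLe d d₂ → ∃ c₂, UX.ClassLe c c₂ ∧ (c₂, d₂) ∈ R)

/-- One refinement step of the fixed-point algorithm deciding hd-bisimilarity. -/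
def refineStep (X Y : HDA) (S : Set (X.toPCSet.Cell × Y.toPCSet.Cell)) :
    Set (X.toPCSet.Cell × Y.toPCSet.Cell) :=
  { p | p ∈ S ∧ p.1.1 = p.2.1 ∧
    (∀ (n : ℕ) (x : X.cube (n + 1)) (y : Y.cube (n + 1)),
      p = (⟨n + 1, x⟩, ⟨n + 1, y⟩) →
      ∀ (ν : Bool) (k : Fin (n + 1)),
        ((⟨n, X.toPCSet.face ν k x⟩, ⟨n, Y.toPCSet.face ν k y⟩) : _ × _) ∈ S) ∧
    (∀ (n : ℕ) (x₁ : X.cube n) (y₁ : Y.cube n),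
      p = (⟨n, x₁⟩, ⟨n, y₁⟩) →
      (∀ (x₂ : X.cube (n + 1)) (k : Fin (n + 1)), x₁ = X.toPCSet.face false k x₂ →
        ∃ y₂ : Y.cube (n + 1), y₁ = Y.toPCSet.face false k y₂ ∧
          ((⟨n + 1, x₂⟩, ⟨n + 1, y₂⟩) : _ × _) ∈ S) ∧
      (∀ (y₂ : Y.cube (n + 1)) (k : Fin (n + 1)), y₁ = Y.toPCSet.face false k y₂ →
        ∃ x₂ : X.cube (n + 1), x₁ = X.toPCSet.face false k x₂ ∧
          ((⟨n + 1, x₂⟩, ⟨n + 1, y₂⟩) : _ × _) ∈ S)) }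

namespace PCSet

variable {X : PCSet}

lemma step_face_false {n : ℕ} (k : Fin (n + 1)) (c : X.cube (n + 1)) :
    X.Step ⟨n, X.face false k c⟩ ⟨n + 1, c⟩ :=
  Or.inl ⟨n, k, c, rfl, rfl⟩

lemma IsCubePath.append_of_getLast?_eq {l l₁ r : List X.Cell} (hl : X.IsCubePath l)
    (h₁ : X.IsCubePath (l₁ ++ r)) (hlast : l.getLast? = l₁.getLast?) :
    X.IsCubePath (l ++ r) := by
  have h₁ := List.isChain_append.1 h₁.2
  refine ⟨by simp [hl.1], List.isChain_append.2 ⟨hl.2, h₁.2.1, ?_⟩⟩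
  rw [hlast]
  exact h₁.2.2

lemma Adjacent.getLast?_eq {l₁ l₂ : List X.Cell} (h : X.Adjacent l₁ l₂) :
    l₁.getLast? = l₂.getLast? := by
  obtain ⟨-, -, hlen, p, -, hp, hq, -⟩ := h
  rw [List.getLast?_eq_getElem?, List.getLast?_eq_getElem?, ← hlen]
  exact hq _ (by omega)

lemma Homotopic.getLast?_eq {l₁ l₂ : List X.Cell} (h : X.Homotopic l₁ l₂) :
    l₁.getLast? = l₂.getLast? := by
  induction h with
  | refl => rfl
  | tail _ h ih => exact ih.trans h.getLast?_eq

lemma AdjMid.swap {a b b' c : X.Cell} (h : X.AdjMid a b b' c) : X.AdjMid a b' b c := by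
  unfold AdjMid at *
  tauto

lemma Adjacent.symm {l₁ l₂ : List X.Cell} (h : X.Adjacent l₁ l₂) : X.Adjacent l₂ l₁ := by
  obtain ⟨h₁, h₂, hlen, p, hp₀, hp, hq, hne, a, b, b', c, ha, hb, hb', hc, hm⟩ := h
  refine ⟨h₂, h₁, hlen.symm, p, hp₀, by omega, fun q hq' => (hq q hq').symm, Ne.symm hne,
    a, b', b, c, ?_, hb', hb, ?_, hm.swap⟩
  · rwa [← hq _ (by omega)]
  · rwa [← hq _ (by omega)]

lemma Homotopic.symm {l₁ l₂ : List X.Cell} (h : X.Homotopic l₁ l₂) : X.Homotopic l₂ l₁ := by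
  induction h with
  | refl => exact .refl
  | tail _ h ih => exact .head h.symm ih

lemma Adjacent.append {l₁ l₂ r : List X.Cell} (h : X.Adjacent l₁ l₂)
    (h₁ : X.IsCubePath (l₁ ++ r)) (h₂ : X.IsCubePath (l₂ ++ r)) :
    X.Adjacent (l₁ ++ r) (l₂ ++ r) := by
  obtain ⟨-, -, hlen, p, hp₀, hp, hq, hne, a, b, b', c, ha, hb, hb', hc, hm⟩ := h
  have hidx : ∀ q < l₁.length, (l₁ ++ r)[q]? = l₁[q]? ∧ (l₂ ++ r)[q]? = l₂[q]? :=
    fun q hq => ⟨List.getElem?_append_left hq, List.getElem?_append_left (hlen ▸ hq)⟩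
  refine ⟨h₁, h₂, by simp [hlen], p, hp₀, by simp; omega, fun q hq' => ?_, ?_,
    a, b, b', c, ?_, ?_, ?_, ?_, hm⟩
  · simp only [List.getElem?_append, hlen]
    split_ifs
    · exact hq q hq'
    · rfl
  · rwa [(hidx p (by omega)).1, (hidx p (by omega)).2]
  · rwa [(hidx _ (by omega)).1]
  · rwa [(hidx _ (by omega)).1]
  · rwa [(hidx _ (by omega)).2]
  · rwa [(hidx _ (by omega)).1]

lemma Homotopic.append {l₁ l₂ r : List X.Cell} (h : X.Homotopic l₁ l₂)
    (h₁ : X.IsCubePath (l₁ ++ r)) : X.Homotopic (l₁ ++ r) (l₂ ++ r) := by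
  induction h with
  | refl => exact .refl
  | @tail l l' hll hadj ih =>
    have hl : X.IsCubePath (l ++ r) :=
      hadj.1.append_of_getLast?_eq h₁ (Homotopic.getLast?_eq hll).symm
    exact ih.tail <| hadj.append hl <|
      hadj.2.1.append_of_getLast?_eq hl hadj.getLast?_eq.symm

lemma adjacent_append_cons {pre suf : List X.Cell} {a b b' c : X.Cell}
    (h₁ : X.IsCubePath (pre ++ b :: suf)) (h₂ : X.IsCubePath (pre ++ b' :: suf))
    (ha : pre.getLast? = some a) (hc : suf.head? = some c) (hne : b ≠ b')
    (hm : X.AdjMid a b b' c) :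
    X.Adjacent (pre ++ b :: suf) (pre ++ b' :: suf) := by
  have hpre : pre.length ≠ 0 := by rintro h; simp [List.length_eq_zero_iff.1 h] at ha
  have hsuf : suf.length ≠ 0 := by rintro h; simp [List.length_eq_zero_iff.1 h] at hc
  refine ⟨h₁, h₂, by simp, pre.length, by omega, by simp; omega, fun q hq => ?_, by simpa,
    a, b, b', c, ?_, by simp, by simp, ?_, hm⟩
  · simp only [List.getElem?_append, List.getElem?_cons]
    split_ifs <;> first | rfl | omega
  · rw [List.getElem?_append_left (by omega), ← ha, List.getLast?_eq_getElem?]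
  · rw [List.getElem?_append_right (by omega), ← hc, List.head?_eq_getElem?]
    simp

lemma lowerChain_getLast? (n : ℕ) (x : X.cube n) (ks : ∀ j : Fin n, Fin (j.1 + 1)) :
    (X.lowerChain n x ks).getLast? = some ⟨n, x⟩ := by
  cases n <;> simp [lowerChain]

lemma lowerChain_isCubePath (n : ℕ) (x : X.cube n) (ks : ∀ j : Fin n, Fin (j.1 + 1)) :
    X.IsCubePath (X.lowerChain n x ks) := by
  induction n with
  | zero => exact ⟨by simp [lowerChain], List.isChain_singleton _⟩
  | succ n ih =>
    refine ⟨by simp [lowerChain], List.isChain_append.2 ⟨(ih _ _).2, List.isChain_singleton _, ?_⟩⟩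
    simp only [lowerChain_getLast?, Option.mem_def, Option.some.injEq, List.head?_cons]
    rintro _ rfl _ rfl
    exact step_face_false _ x

def snocIndex {n : ℕ} (ks : ∀ j : Fin n, Fin (j.1 + 1)) (k : Fin (n + 1)) :
    ∀ j : Fin (n + 1), Fin (j.1 + 1) :=
  fun j => if h : j.1 < n then ks ⟨j, h⟩ else ⟨k, by omega⟩

@[simp]
lemma snocIndex_top {n : ℕ} (ks : ∀ j : Fin n, Fin (j.1 + 1)) (k : Fin (n + 1)) :
    snocIndex ks k ⟨n, n.lt_succ_self⟩ = k := by
  simp [snocIndex]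

lemma lowerChain_snocIndex {n : ℕ} (y : X.cube (n + 1)) (ks : ∀ j : Fin n, Fin (j.1 + 1))
    (k : Fin (n + 1)) :
    X.lowerChain (n + 1) y (snocIndex ks k) =
      X.lowerChain n (X.face false k y) ks ++ [⟨n + 1, y⟩] := by
  simp [lowerChain, snocIndex]

section Induction

variable {n : ℕ} (IH : ∀ (y : X.cube n) (ks ls : ∀ j : Fin n, Fin (j.1 + 1)),
  X.Homotopic (X.lowerChain n y ks) (X.lowerChain n y ls))
include IH

lemma homotopic_lowerChain_of_top_eq (x : X.cube (n + 1))
    {ks ls : ∀ j : Fin (n + 1), Fin (j.1 + 1)}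
    (h : ks ⟨n, n.lt_succ_self⟩ = ls ⟨n, n.lt_succ_self⟩) :
    X.Homotopic (X.lowerChain (n + 1) x ks) (X.lowerChain (n + 1) x ls) := by
  have hks := lowerChain_isCubePath (n + 1) x ks
  rw [lowerChain] at hks ⊢
  rw [lowerChain, ← h]
  exact (IH _ _ _).append hks

lemma homotopic_lowerChain_of_top_lt (x : X.cube (n + 1))
    {ks ls : ∀ j : Fin (n + 1), Fin (j.1 + 1)}
    (h : (ks ⟨n, n.lt_succ_self⟩).1 < (ls ⟨n, n.lt_succ_self⟩).1) :
    X.Homotopic (X.lowerChain (n + 1) x ks) (X.lowerChain (n + 1) x ls) := by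
  set K := ks ⟨n, n.lt_succ_self⟩
  set L := ls ⟨n, n.lt_succ_self⟩
  obtain ⟨m, rfl⟩ : ∃ m, n = m + 1 := ⟨n - 1, by omega⟩
  have hK : K.1 < m + 1 := by omega
  have hface : X.face false ⟨K, hK⟩ (X.face false L x) =
      X.face false ⟨L - 1, by omega⟩ (X.face false K x) :=
    X.precub false false K L hK L.isLt h x
  let zeros : ∀ j : Fin m, Fin (j.1 + 1) := fun _ => 0
  let pathK := X.lowerChain (m + 2) x (snocIndex (snocIndex zeros ⟨L - 1, by omega⟩) K)
  let pathL := X.lowerChain (m + 2) x (snocIndex (snocIndex zeros ⟨K, hK⟩) L)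
  have hks : X.Homotopic (X.lowerChain (m + 2) x ks) pathK :=
    homotopic_lowerChain_of_top_eq IH x (snocIndex_top _ K).symm
  have hls : X.Homotopic pathL (X.lowerChain (m + 2) x ls) :=
    homotopic_lowerChain_of_top_eq IH x (snocIndex_top _ L)
  -- `pathK` and `pathL` differ only in their penultimate cube: an exchange of type (1).
  have hKL : X.Homotopic pathK pathL := by
    have hcpK : X.IsCubePath pathK := lowerChain_isCubePath _ _ _
    have hcpL : X.IsCubePath pathL := lowerChain_isCubePath _ _ _
    simp only [pathK, pathL, lowerChain_snocIndex, hface, List.append_assoc,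
      List.singleton_append] at hcpK hcpL ⊢
    by_cases hb : X.face false L x = X.face false K x
    · rw [hb]
      exact .refl
    refine .single (adjacent_append_cons hcpL hcpK (lowerChain_getLast? _ _ _) rfl
      (by simpa using hb) (Or.inl ⟨m, K, L, hK, L.isLt, h, x, rfl, rfl, rfl, ?_, rfl⟩)).symm
    rw [hface]
  exact hks.trans (hKL.trans hls)

end Induction

end PCSet

/-- Lemma 4.4: any two cube paths `(x_1, …, x_n, x)` obtained from `x` by
iterated lower faces `x_j = δ_{k_j}^0 ⋯ δ_{k_n}^0 x` (with `k_j ≤ j`) are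
homotopic. -/
theorem lowerChain_homotopic (X : PCSet) (n : ℕ) (x : X.cube n)
    (ks ls : ∀ j : Fin n, Fin (j.1 + 1)) :
    X.Homotopic (X.lowerChain n x ks) (X.lowerChain n x ls) := by
  induction n with
  | zero => exact .refl
  | succ n IH =>
    rcases lt_trichotomy (ks ⟨n, n.lt_succ_self⟩).1 (ls ⟨n, n.lt_succ_self⟩).1 with h | h | h
    · exact PCSet.homotopic_lowerChain_of_top_lt IH x h
    · exact PCSet.homotopic_lowerChain_of_top_eq IH x (Fin.ext h)
    · exact (PCSet.homotopic_lowerChain_of_top_lt IH x h).symm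
end

section
/- Let (x_1,…,x_m) be a pointed cube path in a higher-dimensional automaton, let n_j = dim x_j denote the dimension of x_j, and let T(x_1,…,x_m) = n_1 + ⋯ + n_m. Then: (i) j − n_j is odd for all j = 1,…,m; (ii) T(x_1,…,x_m) ≥ (n_m² + m − 1)/2, with equality if and only if (x_1,…,x_m) is fan-shaped; and (iii) T(x_1,…,x_m) ≡ (n_m² + m − 1)/2 (mod 2). -/
set_option autoImplicit false

open PCSet

/-!
Along a cube path the dimension changes by exactly one at each step, so the dimension
sequence `n_1, …, n_m` is a walk with unit steps from `0` to `n_m`. Hence `n_j ≡ j - 1`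
(mod 2), and `n_j` is bounded below both by this parity and by `n_m - (m - j)`, the
dimension it still has to climb. The pointwise maximum of these two bounds is exactly the
dimension sequence of a fan-shaped path, whose sum is `(n_m² + m - 1)/2`; since each
`n_j` exceeds the bound by an even number, both the inequality and the congruence follow,
and equality forces the path to be fan-shaped.
-/

structure IsUnitWalk (d : ℕ → ℕ) (m n : ℕ) : Prop where
  length_pos : 0 < m
  start : d 0 = 0
  last : d (m - 1) = n
  step : ∀ i, i + 1 < m → d (i + 1) = d i + 1 ∨ d i = d (i + 1) + 1

/-- The dimension of the `i`-th cube (counting from `0`) of a fan-shaped path of length `m`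
ending in an `n`-cube. -/
def fanDim (n m i : ℕ) : ℕ := max (i % 2) (n + i + 1 - m)

theorem two_mul_sum_range_mod_two (m : ℕ) : 2 * ∑ i ∈ Finset.range m, i % 2 = m - m % 2 := by
  induction m with
  | zero => simp
  | succ m ih => rw [Finset.sum_range_succ]; omega

theorem two_mul_sum_fanDim {n m : ℕ} (hnm : n < m) (hparity : n % 2 = (m - 1) % 2) :
    2 * ∑ i ∈ Finset.range m, fanDim n m i = n ^ 2 + m - 1 := by
  induction n generalizing m with
  | zero =>
    have hfan : ∀ i ∈ Finset.range m, fanDim 0 m i = i % 2 := by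
      intro i hi
      simp only [fanDim, Finset.mem_range] at hi ⊢
      omega
    rw [Finset.sum_congr rfl hfan, two_mul_sum_range_mod_two]
    omega
  | succ n ih =>
    obtain ⟨m, rfl⟩ : ∃ m', m = m' + 1 := ⟨m - 1, by omega⟩
    have hfan : ∀ i ∈ Finset.range m, fanDim (n + 1) (m + 1) i = fanDim n m i := by
      intro i _
      simp only [fanDim]
      omega
    rw [Finset.sum_range_succ, Finset.sum_congr rfl hfan, mul_add, ih (by omega) (by omega)]
    simp only [fanDim]
    rw [max_eq_right (by omega)]
    have hsq : (n + 1) ^ 2 = n ^ 2 + 2 * n + 1 := by ring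
    omega

namespace IsUnitWalk

variable {d : ℕ → ℕ} {m n : ℕ}

theorem le_add_sub (w : IsUnitWalk d m n) {i j : ℕ} (hij : i ≤ j) (hj : j < m) :
    d j ≤ d i + (j - i) := by
  induction j, hij using Nat.le_induction with
  | base => simp
  | succ j _ ih =>
    have := w.step j hj
    have := ih (by omega)
    omega

theorem le_index (w : IsUnitWalk d m n) {i : ℕ} (hi : i < m) : d i ≤ i := by
  have := w.le_add_sub (Nat.zero_le i) hi
  rw [w.start] at this
  omega

theorem mod_two (w : IsUnitWalk d m n) {i : ℕ} (hi : i < m) : d i % 2 = i % 2 := by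
  induction i with
  | zero => simp [w.start]
  | succ i ih =>
    have := w.step i hi
    have := ih (by omega)
    omega

theorem lt_length (w : IsUnitWalk d m n) : n < m := by
  have hm := w.length_pos
  have := w.le_index (i := m - 1) (by omega)
  rw [w.last] at this
  omega

theorem fanDim_le (w : IsUnitWalk d m n) {i : ℕ} (hi : i < m) : fanDim n m i ≤ d i := by
  have hclimb := w.le_add_sub (i := i) (j := m - 1) (by omega) (by omega)
  rw [w.last] at hclimb
  have := w.mod_two hi
  simp only [fanDim]
  omega

theorem end_mod_two (w : IsUnitWalk d m n) : n % 2 = (m - 1) % 2 := by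
  have hm := w.length_pos
  rw [← w.last, w.mod_two (by omega)]

theorem fanDim_mod_two (w : IsUnitWalk d m n) {i : ℕ} (hi : i < m) :
    fanDim n m i % 2 = d i % 2 := by
  have := w.end_mod_two
  have := w.mod_two hi
  simp only [fanDim]
  omega

theorem sum_fanDim_le (w : IsUnitWalk d m n) :
    ∑ i ∈ Finset.range m, fanDim n m i ≤ ∑ i ∈ Finset.range m, d i :=
  Finset.sum_le_sum fun _ hi => w.fanDim_le (Finset.mem_range.1 hi)

theorem sum_eq_sum_fanDim_iff (w : IsUnitWalk d m n) :
    ∑ i ∈ Finset.range m, d i = ∑ i ∈ Finset.range m, fanDim n m i ↔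
      ∀ i < m, d i = fanDim n m i := by
  rw [eq_comm, Finset.sum_eq_sum_iff_of_le fun _ hi => w.fanDim_le (Finset.mem_range.1 hi)]
  simp only [Finset.mem_range, eq_comm]

theorem sum_mod_two (w : IsUnitWalk d m n) :
    (∑ i ∈ Finset.range m, d i) % 2 = (∑ i ∈ Finset.range m, fanDim n m i) % 2 := by
  rw [Finset.sum_nat_mod, Finset.sum_nat_mod _ _ (fanDim n m)]
  congr 1
  exact Finset.sum_congr rfl fun _ hi => (w.fanDim_mod_two (Finset.mem_range.1 hi)).symm

end IsUnitWalk

theorem List.sum_eq_sum_range_getD {M : Type*} [AddCommMonoid M] (l : List M) :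
    l.sum = ∑ i ∈ Finset.range l.length, l.getD i 0 := by
  rw [← Fin.sum_univ_getElem, ← Fin.sum_univ_eq_sum_range]
  exact Finset.sum_congr rfl fun i _ => (l.getD_eq_getElem 0 i.2).symm

theorem List.fst_get_eq_getD_map_fst {α : Type*} {β : α → Type*} (l : List (Sigma β)) (a : α)
    {i : ℕ} (hi : i < l.length) : (l.get ⟨i, hi⟩).1 = (l.map Sigma.fst).getD i a := by
  rw [List.getD_eq_getElem _ _ (by simpa using hi)]
  simp

theorem List.IsChain.isUnitWalk {ds : List ℕ} {n : ℕ}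
    (hchain : ds.IsChain fun a b => b = a + 1 ∨ a = b + 1) (hhead : ds.head? = some 0)
    (hlast : ds.getLast? = some n) : IsUnitWalk (ds.getD · 0) ds.length n where
  length_pos := List.length_pos_iff.2 (by rintro rfl; simp at hhead)
  start := by simp [← List.head?_eq_getElem?, hhead]
  last := by simp [← List.getLast?_eq_getElem?, hlast]
  step i hi := by
    rw [List.getD_eq_getElem _ _ hi, List.getD_eq_getElem _ _ (Nat.lt_of_succ_lt hi)]
    exact List.isChain_iff_getElem.1 hchain i hi

namespace PCSet

theorem Step.fst_eq_or {X : PCSet} {x y : X.Cell} (h : X.Step x y) :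
    y.1 = x.1 + 1 ∨ x.1 = y.1 + 1 := by
  rcases h with ⟨_, _, _, rfl, rfl⟩ | ⟨_, _, _, rfl, rfl⟩ <;> simp

theorem isFan_iff {X : PCSet} {l : List X.Cell} {n : ℕ} {c : X.cube n}
    (hl : l.getLast? = some ⟨n, c⟩) :
    IsFan X l ↔ ∀ i < l.length, (l.map Sigma.fst).getD i 0 = fanDim n l.length i := by
  constructor
  · rintro ⟨n', c', hl', hfan⟩ i hi
    obtain rfl : n' = n := by
      rw [hl, Option.some_inj] at hl'
      exact (congrArg Sigma.fst hl').symm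
    have := hfan i hi
    rw [List.fst_get_eq_getD_map_fst _ 0] at this
    simp only [fanDim]
    split_ifs at this <;> omega
  · intro hfan
    refine ⟨n, c, hl, fun i hi => ?_⟩
    have := hfan i hi
    rw [List.fst_get_eq_getD_map_fst _ 0]
    simp only [fanDim] at this
    split_ifs <;> omega

end PCSet

theorem HDA.IsPointedPath.isUnitWalk {X : HDA} {l : List X.toPCSet.Cell}
    (h : X.IsPointedPath l) {n : ℕ} {c : X.cube n} (hl : l.getLast? = some ⟨n, c⟩) :
    IsUnitWalk ((l.map Sigma.fst).getD · 0) l.length n := by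
  obtain ⟨⟨-, hchain⟩, hhead⟩ := h
  have hdims : (l.map Sigma.fst).IsChain fun a b => b = a + 1 ∨ a = b + 1 :=
    (List.isChain_map _).2 (hchain.imp fun _ _ => Step.fst_eq_or)
  have hw := hdims.isUnitWalk (n := n) (by simp [hhead]) (by simp [hl])
  rwa [List.length_map] at hw

/-- For a pointed cube path `(x_1, …, x_m)` with `n_j = dim x_j` and
`T = n_1 + ⋯ + n_m`: (i) `j − n_j` is odd for all `j`; (ii)
`T ≥ (n_m² + m − 1)/2`, with equality iff the path is fan-shaped; and (iii)
`T ≡ (n_m² + m − 1)/2 (mod 2)`. -/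
theorem pointed_path_dimension_count (X : HDA) (l : List X.toPCSet.Cell)
    (h : X.IsPointedPath l) (n : ℕ) (c : X.cube n)
    (hl : l.getLast? = some ⟨n, c⟩) :
    (∀ (i : ℕ) (hi : i < l.length), Odd (i + 1 - (l.get ⟨i, hi⟩).1)) ∧
    (n ^ 2 + l.length - 1 ≤ 2 * (l.map Sigma.fst).sum) ∧
    (2 * (l.map Sigma.fst).sum = n ^ 2 + l.length - 1 ↔ IsFan X.toPCSet l) ∧
    (l.map Sigma.fst).sum % 2 = ((n ^ 2 + l.length - 1) / 2) % 2 := by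
  have hw := h.isUnitWalk hl
  have hfan := two_mul_sum_fanDim hw.lt_length hw.end_mod_two
  rw [isFan_iff hl, List.sum_eq_sum_range_getD, List.length_map, ← hfan,
    Nat.mul_div_cancel_left _ two_pos, Nat.mul_left_cancel_iff two_pos, hw.sum_eq_sum_fanDim_iff]
  refine ⟨fun i hi => ?_, Nat.mul_le_mul_left 2 hw.sum_fanDim_le, Iff.rfl, hw.sum_mod_two⟩
  have := hw.mod_two hi
  have := hw.le_index hi
  rw [List.fst_get_eq_getD_map_fst _ 0, Nat.odd_iff]
  omega
end

section
/- If X is a higher-dimensional automaton and (x̃_1,…,x̃_m) is a pointed cube path in the unfolding X̃, then for every j = 1,…,m the sequence (π_X x̃_1,…,π_X x̃_j) is a pointed cube path in X belonging to the homotopy class x̃_j. -/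
set_option autoImplicit false

open PCSet

namespace PCSet

variable {X : PCSet}

theorem IsCubePath.append_step {l : List X.Cell} {x y : X.Cell} (hl : X.IsCubePath l)
    (hx : l.getLast? = some x) (hxy : X.Step x y) : X.IsCubePath (l ++ [y]) := by
  refine ⟨by simp, hl.2.append (List.isChain_singleton y) ?_⟩
  rintro x' hx' y' hy'
  rw [hx, Option.mem_some_iff] at hx'
  rw [List.head?_singleton, Option.mem_some_iff] at hy'
  exact hx' ▸ hy' ▸ hxy

end PCSet

theorem HDA.IsPointedPath.append_step {X : HDA} {l : List X.toPCSet.Cell}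
    {x y : X.toPCSet.Cell} (hl : X.IsPointedPath l) (hx : l.getLast? = some x)
    (hxy : X.toPCSet.Step x y) : X.IsPointedPath (l ++ [y]) :=
  ⟨hl.1.append_step hx hxy, by rw [List.head?_append_of_ne_nil _ hl.1.1, hl.2]⟩

namespace Unfolding

variable {X : HDA} (U : Unfolding X)

/-- `y = [l]` in the unfolding `X̃`. -/
def Represents (l : List X.toPCSet.Cell) (y : U.Xu.toPCSet.Cell) : Prop :=
  ∃ a : X.PPath y.1, a.1 = l ∧ U.cls y.1 a = y.2

theorem represents_base : U.Represents [⟨0, X.base⟩] ⟨0, U.Xu.base⟩ :=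
  ⟨⟨[⟨0, X.base⟩], ⟨⟨by simp, List.isChain_singleton _⟩, rfl⟩, X.base, rfl⟩, rfl,
    U.cls_base _ rfl⟩

theorem proj_cell_base : U.proj.toHom.cell ⟨0, U.Xu.base⟩ = ⟨0, X.base⟩ := by
  simp [Hom.cell, U.proj.pointed]

variable {U}

/-- The defining property of `δ̃_k^0` says that `l * (π_X c)` lies in the class `c`. -/
theorem Represents.append_of_face_false {m : ℕ} {k : Fin (m + 1)} {c : U.Xu.cube (m + 1)}
    {l : List X.toPCSet.Cell} (hl : U.Represents l ⟨m, U.Xu.toPCSet.face false k c⟩) :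
    U.Represents (l ++ [U.proj.toHom.cell ⟨m + 1, c⟩]) ⟨m + 1, c⟩ := by
  obtain ⟨a, rfl, hac⟩ := hl
  dsimp only at a hac
  obtain ⟨a', rfl⟩ := U.cls_surj (m + 1) c
  obtain ⟨-, c₀, hlast'⟩ := a'.2
  obtain ⟨hlast, hhom⟩ := (U.face_false m k a' c₀ hlast' a).mp hac.symm
  have hproj : U.proj.toHom.cell ⟨m + 1, U.cls (m + 1) a'⟩ = ⟨m + 1, c₀⟩ := by
    simp [Hom.cell, U.proj_cls (m + 1) a' c₀ hlast']
  rw [hproj]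
  let b : X.PPath (m + 1) :=
    ⟨a.1 ++ [⟨m + 1, c₀⟩], a.2.1.append_step hlast (Or.inl ⟨m, k, c₀, rfl, rfl⟩), c₀,
      List.getLast?_concat⟩
  exact ⟨b, rfl, (U.cls_eq (m + 1) b a').mpr hhom⟩

theorem Represents.append_face_true {m : ℕ} {k : Fin (m + 1)} {c : U.Xu.cube (m + 1)}
    {l : List X.toPCSet.Cell} (hl : U.Represents l ⟨m + 1, c⟩) :
    U.Represents (l ++ [U.proj.toHom.cell ⟨m, U.Xu.toPCSet.face true k c⟩])
      ⟨m, U.Xu.toPCSet.face true k c⟩ := by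
  obtain ⟨a, rfl, hac⟩ := hl
  dsimp only at a hac
  subst hac
  obtain ⟨-, c₀, hlast⟩ := a.2
  have hproj : U.proj.toHom.cell ⟨m, U.Xu.toPCSet.face true k (U.cls (m + 1) a)⟩ =
      ⟨m, X.toPCSet.face true k c₀⟩ := by
    simp [Hom.cell, U.proj.toHom.comm, U.proj_cls (m + 1) a c₀ hlast]
  rw [hproj]
  let b : X.PPath m :=
    ⟨a.1 ++ [⟨m, X.toPCSet.face true k c₀⟩],
      a.2.1.append_step hlast (Or.inr ⟨m, k, c₀, rfl, rfl⟩), _, List.getLast?_concat⟩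
  exact ⟨b, rfl, (U.face_true m k a c₀ hlast b rfl).symm⟩

theorem Represents.append_of_step {l : List X.toPCSet.Cell} {y z : U.Xu.toPCSet.Cell}
    (hl : U.Represents l y) (hyz : U.Xu.toPCSet.Step y z) :
    U.Represents (l ++ [U.proj.toHom.cell z]) z := by
  rcases hyz with ⟨m, k, c, rfl, rfl⟩ | ⟨m, k, c, rfl, rfl⟩
  · exact hl.append_of_face_false
  · exact hl.append_face_true

theorem represents_map_take {lt : List U.Xu.toPCSet.Cell} (h : U.Xu.IsPointedPath lt) :
    ∀ (j : ℕ) (hj : j < lt.length),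
      U.Represents ((lt.take (j + 1)).map U.proj.toHom.cell) lt[j]
  | 0, hj => by
    obtain ⟨⟨hne, -⟩, hhead⟩ := h
    obtain ⟨y, l, rfl⟩ := List.exists_cons_of_ne_nil hne
    obtain rfl : y = ⟨0, U.Xu.base⟩ := by simpa using hhead
    simpa [U.proj_cell_base] using U.represents_base
  | j + 1, hj => by
    have hstep := List.isChain_iff_getElem.mp h.1.2 j hj
    rw [List.take_add_one, List.getElem?_eq_getElem hj, Option.toList_some, List.map_append,
      List.map_singleton]
    exact (represents_map_take h j (by omega)).append_of_step hstep

end Unfolding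

/-- Lemma 4.7: if `(x̃_1, …, x̃_m)` is a pointed cube path in the unfolding
`X̃`, then for every `j` the projected prefix `(π_X x̃_1, …, π_X x̃_j)` is a
pointed cube path in `X` belonging to the homotopy class `x̃_j`. -/
theorem unfolding_path_representatives (X : HDA) (U : Unfolding X)
    (lt : List U.Xu.toPCSet.Cell) (h : U.Xu.IsPointedPath lt) :
    ∀ (j : ℕ) (hj : j < lt.length) (n : ℕ) (x : U.Xu.cube n),
      lt.get ⟨j, hj⟩ = ⟨n, x⟩ →
      ∃ a : X.PPath n,
        a.1 = (lt.take (j + 1)).map U.proj.toHom.cell ∧ U.cls n a = x := by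
  intro j hj n x hx
  have hrep := Unfolding.represents_map_take h j hj
  rwa [show lt[j] = ⟨n, x⟩ from hx] at hrep
end

section
/- Every pointed precubical morphism f : T → Y from a higher-dimensional tree T to an HDA Y factors uniquely through the projection: there exists a unique pointed precubical morphism g : T → Ỹ with f = π_Y∘g. Consequently, the unfolding functor U : HDA → HDT (sending X to X̃ and f : X → Y to f̃ : X̃ → Ỹ, f̃[x_1,…,x_m] = [f(x_1),…,f(x_m)]) is right adjoint to the inclusion HDT ↪ HDA, with counit the projections π_X. -/
set_option autoImplicit false

open PCSet

/-! A pointed morphism `f : T → Y` out of a higher-dimensional tree lifts to the unfolding by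
sending a cube `x` to the class of the image under `f` of a pointed cube path ending in `x`. This is
well defined because any two such paths are homotopic in `T` and precubical morphisms preserve
homotopy, and it commutes with the face maps because extending a path by one step is exactly how the
faces of `Ỹ` are computed. Uniqueness needs only that every cube of `T` is reachable: in an
unfolding the end of a pointed cube path is the class of its projection (induct along the path), so
any `g` with `π_Y ∘ g = f` sends `x` to the class of `f` applied to a path to `x`. -/

namespace PCSet

variable {X Y : PCSet}

theorem Step.map (f : Hom X Y) {a b : X.Cell} (h : X.Step a b) :
    Y.Step (f.cell a) (f.cell b) := by
  rcases h with ⟨n, k, c, rfl, rfl⟩ | ⟨n, k, c, rfl, rfl⟩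
  · exact Or.inl ⟨n, k, f.map _ c, by simp [Hom.cell, f.comm], rfl⟩
  · exact Or.inr ⟨n, k, f.map _ c, rfl, by simp [Hom.cell, f.comm]⟩

theorem IsCubePath.map (f : Hom X Y) {l : List X.Cell} (h : X.IsCubePath l) :
    Y.IsCubePath (l.map f.cell) :=
  ⟨by simpa using h.1, (List.isChain_map f.cell).mpr (h.2.imp fun _ _ => Step.map f)⟩

section Adjacency

variable (f : Hom X Y) {a b b' c : X.Cell}

theorem Adj1.map (h : X.Adj1 a b b' c) :
    Y.Adj1 (f.cell a) (f.cell b) (f.cell b') (f.cell c) := by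
  obtain ⟨n, k, l, hk, hl, hkl, u, rfl, rfl, rfl, rfl, h⟩ := h
  exact ⟨n, k, l, hk, hl, hkl, f.map _ u, rfl, by simp [Hom.cell, f.comm],
    by simp [Hom.cell, f.comm], by simp [Hom.cell, f.comm],
    by simpa [Hom.cell, f.comm] using congrArg f.cell h⟩

theorem Adj2.map (h : X.Adj2 a b b' c) :
    Y.Adj2 (f.cell a) (f.cell b) (f.cell b') (f.cell c) := by
  obtain ⟨n, k, l, hk, hl, hkl, u, rfl, rfl, rfl, rfl, h⟩ := h
  exact ⟨n, k, l, hk, hl, hkl, f.map _ u, rfl, by simp [Hom.cell, f.comm],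
    by simp [Hom.cell, f.comm], by simp [Hom.cell, f.comm],
    by simpa [Hom.cell, f.comm] using congrArg f.cell h⟩

theorem Adj3.map (h : X.Adj3 a b b' c) :
    Y.Adj3 (f.cell a) (f.cell b) (f.cell b') (f.cell c) := by
  obtain ⟨n, k, l, hk, hl, hkl, u, rfl, rfl, rfl, rfl⟩ := h
  exact ⟨n, k, l, hk, hl, hkl, f.map _ u, rfl, by simp [Hom.cell, f.comm],
    by simp [Hom.cell, f.comm], by simp [Hom.cell, f.comm]⟩

theorem Adj4.map (h : X.Adj4 a b b' c) :
    Y.Adj4 (f.cell a) (f.cell b) (f.cell b') (f.cell c) := by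
  obtain ⟨n, k, l, hk, hl, hkl, u, rfl, rfl, rfl, rfl⟩ := h
  exact ⟨n, k, l, hk, hl, hkl, f.map _ u, rfl, by simp [Hom.cell, f.comm],
    by simp [Hom.cell, f.comm], by simp [Hom.cell, f.comm]⟩

theorem AdjMid.map (h : X.AdjMid a b b' c) :
    Y.AdjMid (f.cell a) (f.cell b) (f.cell b') (f.cell c) := by
  rcases h with h | h | h | h | h | h | h | h <;>
    simp only [AdjMid, h.map f, true_or, or_true]

theorem Adjacent.map {l₁ l₂ : List X.Cell} (h : X.Adjacent l₁ l₂) :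
    l₁.map f.cell = l₂.map f.cell ∨ Y.Adjacent (l₁.map f.cell) (l₂.map f.cell) := by
  obtain ⟨h₁, h₂, hlen, p, hp0, hp1, hq, -, a, b, b', c, ha, hb, hb', hc, hmid⟩ := h
  by_cases hbb : f.cell b = f.cell b'
  · left
    refine List.ext_getElem? fun q => ?_
    rcases eq_or_ne q p with rfl | hqp
    · simp [hb, hb', hbb]
    · simp [hq q hqp]
  · right
    refine ⟨h₁.map f, h₂.map f, by simp [hlen], p, hp0, by simpa using hp1,
      fun q hqp => by simp [hq q hqp], by simpa [hb, hb'] using hbb,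
      f.cell a, f.cell b, f.cell b', f.cell c, by simp [ha], by simp [hb], by simp [hb'],
      by simp [hc], hmid.map f⟩

end Adjacency

theorem Homotopic.map (f : Hom X Y) {l₁ l₂ : List X.Cell} (h : X.Homotopic l₁ l₂) :
    Y.Homotopic (l₁.map f.cell) (l₂.map f.cell) := by
  induction h with
  | refl => exact .refl
  | tail _ hadj ih =>
    rcases hadj.map f with heq | hadj'
    · rwa [← heq]
    · exact ih.tail hadj'

end PCSet

theorem HDAHom.ext {X Y : HDA} {f g : HDAHom X Y}
    (h : ∀ n x, f.toHom.map n x = g.toHom.map n x) : f = g := by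
  obtain ⟨⟨fmap, _⟩, _⟩ := f
  obtain ⟨⟨gmap, _⟩, _⟩ := g
  obtain rfl : fmap = gmap := funext fun n => funext (h n)
  rfl

namespace HDA

variable {X Y : HDA}

theorem IsPointedPath.map (f : HDAHom X Y) {l : List X.toPCSet.Cell} (h : X.IsPointedPath l) :
    Y.IsPointedPath (l.map f.toHom.cell) :=
  ⟨h.1.map f.toHom, by simp [h.2, Hom.cell, f.pointed]⟩

theorem isPointedPath_base : X.IsPointedPath [⟨0, X.base⟩] :=
  ⟨⟨List.cons_ne_nil _ _, List.isChain_singleton _⟩, rfl⟩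

theorem IsPointedPath.concat {l : List X.toPCSet.Cell} (h : X.IsPointedPath l)
    {y z : X.toPCSet.Cell} (hy : l.getLast? = some y) (hs : X.toPCSet.Step y z) :
    X.IsPointedPath (l ++ [z]) := by
  refine ⟨⟨by simp, h.1.2.append (List.isChain_singleton z) ?_⟩, ?_⟩
  · simpa [hy] using hs
  · rw [List.head?_append, h.2]
    rfl

theorem IsPointedPath.of_concat {l : List X.toPCSet.Cell} {y z : X.toPCSet.Cell}
    (h : X.IsPointedPath (l ++ [z])) (hy : l.getLast? = some y) :
    X.IsPointedPath l ∧ X.toPCSet.Step y z := by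
  have hne : l ≠ [] := by rintro rfl; simp at hy
  obtain ⟨hchain, -, hstep⟩ := List.isChain_append.mp h.1.2
  refine ⟨⟨⟨hne, hchain⟩, ?_⟩, hstep y hy z rfl⟩
  rw [← h.2, List.head?_append_of_ne_nil _ hne]

def IsPointedPath.toPPath {n : ℕ} {l : List X.toPCSet.Cell} (hl : X.IsPointedPath l)
    {x : X.cube n} (hx : l.getLast? = some ⟨n, x⟩) : X.PPath n :=
  ⟨l, hl, x, hx⟩

@[simp]
theorem IsPointedPath.toPPath_val {n : ℕ} {l : List X.toPCSet.Cell} (hl : X.IsPointedPath l)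
    {x : X.cube n} (hx : l.getLast? = some ⟨n, x⟩) : (hl.toPPath hx).1 = l := rfl

def PPath.map (f : HDAHom X Y) {n : ℕ} (a : X.PPath n) : Y.PPath n :=
  ⟨a.1.map f.toHom.cell, a.2.1.map f,
    a.2.2.imp' (f.toHom.map n) fun c hc => by simp [hc, Hom.cell]⟩

@[simp]
theorem PPath.map_val (f : HDAHom X Y) {n : ℕ} (a : X.PPath n) :
    (a.map f).1 = a.1.map f.toHom.cell := rfl

end HDA

namespace Unfolding

variable {Y : HDA} (U : Unfolding Y)

theorem eq_cls_of_face_false {m : ℕ} (j : Fin (m + 1)) (z : U.Xu.cube (m + 1)) {b' : Y.PPath m}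
    (hz : U.Xu.toPCSet.face false j z = U.cls m b') (b : Y.PPath (m + 1))
    (hb : b.1 = b'.1 ++ [⟨m + 1, U.proj.toHom.map (m + 1) z⟩]) : z = U.cls (m + 1) b := by
  obtain ⟨a, rfl⟩ := U.cls_surj (m + 1) z
  obtain ⟨c, hc⟩ := a.2.2
  have hhom := ((U.face_false m j a c hc b').mp hz).2
  rw [U.proj_cls _ a c hc] at hb
  exact ((U.cls_eq _ b a).mpr (hb ▸ hhom)).symm

theorem eq_cls_of_isPointedPath {L : List U.Xu.toPCSet.Cell} (hL : U.Xu.IsPointedPath L)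
    {n : ℕ} {z : U.Xu.cube n} (hz : L.getLast? = some ⟨n, z⟩) (b : Y.PPath n)
    (hb : b.1 = L.map U.proj.toHom.cell) : z = U.cls n b := by
  induction L using List.reverseRecOn generalizing n with
  | nil => exact absurd rfl hL.1.1
  | append_singleton L w ih =>
    obtain rfl : w = ⟨n, z⟩ := by simpa using hz
    cases hy : L.getLast? with
    | none =>
      obtain rfl : L = [] := List.getLast?_eq_none_iff.mp hy
      obtain ⟨rfl, hzb⟩ := Sigma.mk.inj_iff.mp (Option.some.inj hL.2)
      obtain rfl := eq_of_heq hzb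
      exact (U.cls_base b (by simp [hb, Hom.cell, U.proj.pointed])).symm
    | some y =>
      obtain ⟨hL', hstep⟩ := hL.of_concat hy
      have hb' : ((hL'.toPPath hy).map U.proj).1 = L.map U.proj.toHom.cell := rfl
      set b' := (hL'.toPPath hy).map U.proj
      rcases hstep with ⟨m, j, c, rfl, ⟨⟩⟩ | ⟨m, j, c, rfl, ⟨⟩⟩
      · exact U.eq_cls_of_face_false j c (ih hL' hy b' hb') b (by simp [hb, hb', Hom.cell])
      · rw [ih hL' hy b' hb']
        exact U.face_true _ j b' (U.proj.toHom.map _ c) (by simp [hb', hy, Hom.cell]) b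
          (by simp [hb, hb', Hom.cell, U.proj.toHom.comm])

end Unfolding

namespace HDA.IsTree

variable {T Y : HDA} (hT : T.IsTree) (U : Unfolding Y)

noncomputable def pathTo {n : ℕ} (x : T.cube n) : T.PPath n :=
  (hT ⟨n, x⟩).1.choose_spec.1.toPPath (hT ⟨n, x⟩).1.choose_spec.2

theorem pathTo_getLast? {n : ℕ} (x : T.cube n) :
    (hT.pathTo x).1.getLast? = some ⟨n, x⟩ :=
  (hT ⟨n, x⟩).1.choose_spec.2

noncomputable def liftMap (f : HDAHom T Y) (n : ℕ) (x : T.cube n) : U.Xu.cube n :=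
  U.cls n ((hT.pathTo x).map f)

theorem liftMap_eq (f : HDAHom T Y) {n : ℕ} {x : T.cube n} (a : T.PPath n)
    (ha : a.1.getLast? = some ⟨n, x⟩) : hT.liftMap U f n x = U.cls n (a.map f) :=
  (U.cls_eq n _ _).mpr <|
    ((hT ⟨n, x⟩).2 _ _ (hT.pathTo x).2.1 (hT.pathTo_getLast? x) a.2.1 ha).map f.toHom

theorem liftMap_face (f : HDAHom T Y) (n : ℕ) (ν : Bool) (k : Fin (n + 1))
    (x : T.cube (n + 1)) :
    hT.liftMap U f n (T.toPCSet.face ν k x) =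
      U.Xu.toPCSet.face ν k (hT.liftMap U f (n + 1) x) := by
  cases ν with
  | true =>
    have ha := hT.pathTo_getLast? x
    set a := hT.pathTo x
    set b := (a.2.1.concat ha (Or.inr ⟨n, k, x, rfl, rfl⟩)).toPPath List.getLast?_concat
    rw [hT.liftMap_eq U f b List.getLast?_concat]
    exact (U.face_true n k (a.map f) (f.toHom.map _ x) (by simp [ha, Hom.cell]) (b.map f)
      (by simp [b, Hom.cell, f.toHom.comm])).symm
  | false =>
    have hb := hT.pathTo_getLast? (T.toPCSet.face false k x)
    set b := hT.pathTo (T.toPCSet.face false k x)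
    set a := (b.2.1.concat hb (Or.inl ⟨n, k, x, rfl, rfl⟩)).toPPath List.getLast?_concat
    rw [hT.liftMap_eq U f a List.getLast?_concat]
    refine ((U.face_false n k (a.map f) (f.toHom.map _ x) (by simp [a, Hom.cell])
      (b.map f)).mpr ⟨by simp [hb, Hom.cell, f.toHom.comm], ?_⟩).symm
    simp only [a, PPath.map_val, IsPointedPath.toPPath_val, List.map_append]
    exact .refl

noncomputable def lift (f : HDAHom T Y) : HDAHom T U.Xu where
  toHom := ⟨hT.liftMap U f, hT.liftMap_face U f⟩
  pointed := by
    show hT.liftMap U f 0 T.base = _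
    rw [hT.liftMap_eq U f (isPointedPath_base.toPPath List.getLast?_singleton)
      List.getLast?_singleton]
    exact U.cls_base _ (by simp [Hom.cell, f.pointed])

theorem proj_comp_lift (f : HDAHom T Y) : U.proj.comp (hT.lift U f) = f :=
  HDAHom.ext fun n x => U.proj_cls n _ _ (by simp [hT.pathTo_getLast? x, Hom.cell])

theorem lift_proj_comp (g : HDAHom T U.Xu) : hT.lift U (U.proj.comp g) = g :=
  HDAHom.ext fun n x => (U.eq_cls_of_isPointedPath ((hT.pathTo x).2.1.map g)
    (by simp [hT.pathTo_getLast? x, Hom.cell]) _ (by rw [PPath.map_val, List.map_map]; rfl)).symm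

end HDA.IsTree

/-- Proposition 5.3: every pointed precubical morphism `f : T → Y` from a
higher-dimensional tree factors uniquely through the projection
`π_Y : Ỹ → Y`; consequently (the hom-set bijection of the adjunction)
unfolding is right adjoint to the inclusion HDT ↪ HDA, with counit the
projections. -/
theorem tree_factors_through_unfolding :
    (∀ (T Y : HDA), T.IsTree → ∀ (UY : Unfolding Y) (f : HDAHom T Y),
      ∃! g : HDAHom T UY.Xu, f = UY.proj.comp g) ∧
    (∀ (T Y : HDA), T.IsTree → ∀ UY : Unfolding Y,
      Function.Bijective (fun g : HDAHom T UY.Xu => UY.proj.comp g)) := by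
  refine ⟨fun T Y hT UY f => ⟨hT.lift UY f, (hT.proj_comp_lift UY f).symm, ?_⟩,
    fun T Y hT UY => Function.bijective_iff_has_inverse.mpr
      ⟨hT.lift UY, hT.lift_proj_comp UY, hT.proj_comp_lift UY⟩⟩
  rintro g rfl
  exact (hT.lift_proj_comp UY g).symm
end
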